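/- arXiv:1511.08660 — 3 statements merged into one kernel-verified Lean document; each statement's English description precedes it below -/
import Mathlib

section
/- Let r ≥ 2 be an integer, V a free ℤ-module of rank r−1, and L a symmetric ℤ-bilinear form on V. Suppose (l₁,…,l_r) is an r-tuple of elements of V such that: l₁ + ⋯ + l_r = 0; L(l_i, l_j) > 0 for all i ≠ j; and for every j, the (r−1)-tuple (l₁,…,l_{j−1}, l_{j+1},…,l_r) obtained by omitting l_j is a ℤ-basis of V. Then: (1) L is negative definite on V; and (2) for any other r-tuple (l′₁,…,l′_r) of elements of V satisfying the same three properties, one has {l′₁,…,l′_r} = {l₁,…,l_r} or {l′₁,…,l′_r} = {−l₁,…,−l_r} as subsets of V. -/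
lemma ksl_one_le_sq {x : ℤ} (hx : x ≠ 0) : 1 ≤ x ^ 2 := by
  have h1 : x ^ 2 ≠ 0 := pow_ne_zero _ hx
  have h2 : 0 ≤ x ^ 2 := sq_nonneg _
  omega

/-- An integer vector with zero sum and a nonzero entry has sum of squares ≥ 2. -/
lemma ksl_sq2 {r : ℕ} (w : Fin r → ℤ) (h0 : ∑ k, w k = 0) (k : Fin r) (hk : w k ≠ 0) :
    2 ≤ ∑ i, (w i) ^ 2 := by
  have hex : ∃ m, m ≠ k ∧ w m ≠ 0 := by
    by_contra h
    push_neg at h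
    have : ∑ i, w i = w k := Finset.sum_eq_single k (fun m _ hm => h m hm) (by simp)
    rw [h0] at this; exact hk this.symm
  obtain ⟨m, hmk, hm⟩ := hex
  have h1 : ∑ i ∈ ({k, m} : Finset (Fin r)), (w i) ^ 2 ≤ ∑ i, (w i) ^ 2 :=
    Finset.sum_le_sum_of_subset_of_nonneg (Finset.subset_univ _) (fun i _ _ => sq_nonneg _)
  rw [Finset.sum_pair (Ne.symm hmk)] at h1
  have hk2 := ksl_one_le_sq hk
  have hm2 := ksl_one_le_sq hm
  omega

/-- An integer vector with zero sum and sum of squares 2 is `e_a - e_b`. -/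
lemma ksl_pair {r : ℕ} (w : Fin r → ℤ) (h0 : ∑ k, w k = 0) (h2 : ∑ k, (w k) ^ 2 = 2) :
    ∃ a b : Fin r, a ≠ b ∧ ∀ k, w k = (if k = a then 1 else 0) - (if k = b then 1 else 0) := by
  have hexa : ∃ a, w a ≠ 0 := by
    by_contra h; push_neg at h; simp [h] at h2
  obtain ⟨a, ha⟩ := hexa
  have hexb : ∃ b, b ≠ a ∧ w b ≠ 0 := by
    by_contra h; push_neg at h
    have : ∑ i, w i = w a := Finset.sum_eq_single a (fun m _ hm => h m hm) (by simp)
    rw [h0] at this; exact ha this.symm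
  obtain ⟨b, hba, hb⟩ := hexb
  have hsub : ({a, b} : Finset (Fin r)) ⊆ Finset.univ := Finset.subset_univ _
  have hsplit2 : ∑ i ∈ ({a,b} : Finset (Fin r)), (w i)^2 + ∑ i ∈ Finset.univ \ {a,b}, (w i)^2 = 2 := by
    rw [add_comm, Finset.sum_sdiff hsub, h2]
  have hsplit0 : ∑ i ∈ ({a,b} : Finset (Fin r)), w i + ∑ i ∈ Finset.univ \ {a,b}, w i = 0 := by
    rw [add_comm, Finset.sum_sdiff hsub, h0]
  rw [Finset.sum_pair (Ne.symm hba)] at hsplit2 hsplit0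
  have ha2 := ksl_one_le_sq ha
  have hb2 := ksl_one_le_sq hb
  have hrest : ∑ i ∈ Finset.univ \ {a,b}, (w i)^2 = 0 := by
    have : 0 ≤ ∑ i ∈ Finset.univ \ ({a,b} : Finset (Fin r)), (w i)^2 :=
      Finset.sum_nonneg (fun i _ => sq_nonneg _)
    omega
  have hzero : ∀ i, i ≠ a → i ≠ b → w i = 0 := by
    intro i hia hib
    have hi : i ∈ Finset.univ \ ({a,b} : Finset (Fin r)) := by simp [hia, hib]
    have := (Finset.sum_eq_zero_iff_of_nonneg (fun i _ => sq_nonneg (w i))).mp hrest i hi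
    exact pow_eq_zero_iff (n := 2) (by norm_num) |>.mp this
  have hrest0 : ∑ i ∈ Finset.univ \ ({a,b} : Finset (Fin r)), w i = 0 :=
    Finset.sum_eq_zero (fun i hi => by
      simp only [Finset.mem_sdiff, Finset.mem_insert, Finset.mem_singleton] at hi
      exact hzero i (fun h => hi.2 (Or.inl h)) (fun h => hi.2 (Or.inr h)))
  rw [hrest0] at hsplit0
  rw [hrest] at hsplit2
  have hsq1 : w a ^ 2 = 1 := by omega
  have hcases : w a = 1 ∨ w a = -1 := by
    rcases lt_trichotomy (w a) 0 with h | h | h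
    · right; nlinarith
    · exact absurd h ha
    · left; nlinarith
  rcases hcases with h1 | h1
  · refine ⟨a, b, Ne.symm hba, fun k => ?_⟩
    by_cases hka : k = a
    · subst hka; simp [Ne.symm hba, h1]
    · by_cases hkb : k = b
      · subst hkb; simp [hba]; omega
      · simp [hka, hkb, hzero k hka hkb]
  · refine ⟨b, a, hba, fun k => ?_⟩
    by_cases hka : k = a
    · subst hka; simp [Ne.symm hba, h1]
    · by_cases hkb : k = b
      · subst hkb; simp [hba]; omega
      · simp [hka, hkb, hzero k hka hkb]

lemma ksl_dich {r : ℕ} (a b a' b' x y : Fin r) (hab : a ≠ b) (ha'b' : a' ≠ b') (hxy : x ≠ y)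
    (h : ∀ k : Fin r,
      ((if k = a then (1:ℤ) else 0) - (if k = b then 1 else 0)) -
      ((if k = a' then 1 else 0) - (if k = b' then 1 else 0)) =
      (if k = x then 1 else 0) - (if k = y then 1 else 0)) :
    (a = a' ∧ b ≠ b') ∨ (b = b' ∧ a ≠ a') := by
  by_cases haa : a = a'
  · by_cases hbb : b = b'
    · exfalso
      have hx := h x
      rw [← haa, ← hbb, if_pos rfl, if_neg hxy] at hx
      split_ifs at hx <;> omega
    · exact Or.inl ⟨haa, hbb⟩
  · by_cases hbb : b = b'
    · exact Or.inr ⟨hbb, haa⟩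
    · exfalso
      have hby : b = y := by
        by_contra hby
        have hb := h b
        rw [if_neg (Ne.symm hab), if_pos rfl, if_neg hbb, if_neg hby] at hb
        split_ifs at hb <;> omega
      have hba' : b ≠ a' := by
        intro h1
        have hb := h b
        rw [if_neg (Ne.symm hab), if_pos rfl, if_neg hbb, if_pos h1] at hb
        split_ifs at hb <;> omega
      have hA := h a'
      rw [if_neg (fun hh : a' = a => haa hh.symm), if_neg (Ne.symm hba'),
        if_pos rfl, if_neg ha'b', ← hby, if_neg (Ne.symm hba')] at hA
      split_ifs at hA <;> omega

lemma ksl_glob {ι κ : Type*} (A B : ι → κ)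
    (hx : ∀ i i' : ι, i ≠ i' → (A i = A i' ∧ B i ≠ B i') ∨ (B i = B i' ∧ A i ≠ A i')) :
    (∀ i i', A i = A i') ∨ (∀ i i', B i = B i') := by
  by_cases hA : ∀ i i', A i = A i'
  · exact Or.inl hA
  · push_neg at hA
    obtain ⟨i1, i2, h12⟩ := hA
    have hi12 : i1 ≠ i2 := fun h => h12 (h ▸ rfl)
    have hB12 : B i1 = B i2 := by
      rcases hx i1 i2 hi12 with ⟨h, _⟩ | ⟨h, _⟩
      · exact absurd h h12
      · exact h
    right
    have key : ∀ i, B i = B i1 := by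
      intro i
      by_cases h1 : i = i1
      · rw [h1]
      · by_cases h2 : i = i2
        · rw [h2, hB12]
        · by_contra hBi
          have hAi1 : A i = A i1 := by
            rcases hx i i1 h1 with ⟨h, _⟩ | ⟨h, hc⟩
            · exact h
            · exact absurd h hBi
          have : B i = B i2 := by
            rcases hx i i2 h2 with ⟨h, hc⟩ | ⟨h, _⟩
            · exact absurd (hAi1 ▸ h : A i1 = A i2) h12
            · exact h
          exact hBi (this.trans hB12.symm)
    intro i i'
    rw [key i, key i']

lemma ksl_coords (r : ℕ)
    (V : Type) [AddCommGroup V] [Module ℤ V]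
    (l : Fin r → V) (j₀ : Fin r)
    (bb : Module.Basis {i : Fin r // i ≠ j₀} ℤ V) (hbb : ∀ i, bb i = l (i : Fin r)) :
    ∃ F : V →ₗ[ℤ] (Fin r → ℤ),
      (∀ v : V, ∑ i, F v i • l i = v) ∧
      (∀ v : V, F v j₀ = 0) ∧
      (∀ i : Fin r, i ≠ j₀ → ∀ j, F (l i) j = if j = i then 1 else 0) := by
  refine ⟨{ toFun := fun v i => if h : i = j₀ then 0 else bb.repr v ⟨i, h⟩
            map_add' := by intro u v; funext i; by_cases h : i = j₀ <;> simp [h]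
            map_smul' := by intro m v; funext i; by_cases h : i = j₀ <;> simp [h] },
    ?_, ?_, ?_⟩
  · intro v
    have hs : ∑ i ∈ Finset.univ.erase j₀,
        (if h : i = j₀ then 0 else bb.repr v ⟨i, h⟩) • l i = v := by
      rw [Finset.sum_subtype (Finset.univ.erase j₀)
        (p := fun i : Fin r => i ≠ j₀) (by simp) ]
      have : ∀ i : {i : Fin r // i ≠ j₀},
          (if h : (i:Fin r) = j₀ then (0:ℤ) else bb.repr v ⟨i, h⟩) • l i
            = bb.repr v i • bb i := by
        intro i; rw [dif_neg i.2, hbb]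
      rw [Finset.sum_congr rfl (fun i _ => this i)]
      simp only [← Int.cast_smul_eq_zsmul ℤ, Int.cast_id]
      exact bb.sum_repr v
    have hsplit := (Finset.add_sum_erase Finset.univ
      (fun i => (if h : i = j₀ then (0:ℤ) else bb.repr v ⟨i, h⟩) • l i) (Finset.mem_univ j₀))
    simp only [LinearMap.coe_mk, AddHom.coe_mk]
    rw [← hsplit, hs]
    simp
  · intro v; simp
  · intro i hi j
    simp only [LinearMap.coe_mk, AddHom.coe_mk]
    by_cases hj : j = j₀
    · subst hj
      rw [dif_pos rfl, if_neg (fun h => hi h.symm)]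
    · rw [dif_neg hj, ← hbb ⟨i, hi⟩, bb.repr_self, Finsupp.single_apply]
      by_cases h : j = i
      · subst h; rw [if_pos rfl, if_pos rfl]
      · rw [if_neg (fun hh => h (Subtype.mk_eq_mk.mp hh).symm), if_neg h]

lemma ksl_key (r : ℕ) (V : Type) [AddCommGroup V] [Module ℤ V]
    (L : V →ₗ[ℤ] V →ₗ[ℤ] ℤ) (hsymm : ∀ x y, L x y = L y x)
    (l : Fin r → V) (hsum : ∑ i : Fin r, l i = 0)
    (F : V →ₗ[ℤ] (Fin r → ℤ)) (hrecon : ∀ v : V, ∑ i, F v i • l i = v)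
    (u v : V) :
    ∑ i, ∑ j, L (l i) (l j) * (F u i - F u j) * (F v i - F v j) = -(2 * L u v) := by
  have hrow : ∀ i, ∑ j, L (l i) (l j) = 0 := by
    intro i; rw [← map_sum, hsum, map_zero]
  have hcol : ∀ j, ∑ i, L (l i) (l j) = 0 := by
    intro j
    calc ∑ i, L (l i) (l j) = ∑ i, L (l j) (l i) :=
          Finset.sum_congr rfl (fun i _ => hsymm (l i) (l j))
      _ = 0 := hrow j
  have hexp : ∀ c d : Fin r → ℤ,
      L (∑ i, c i • l i) (∑ j, d j • l j) = ∑ i, ∑ j, c i * d j * L (l i) (l j) := by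
    intro c d
    simp only [← Int.cast_smul_eq_zsmul ℤ, Int.cast_id]
    simp only [map_sum, map_smul, LinearMap.sum_apply, LinearMap.smul_apply, smul_eq_mul]
    rw [Finset.sum_comm]
    refine Finset.sum_congr rfl fun i _ => ?_
    rw [Finset.mul_sum]
    refine Finset.sum_congr rfl fun j _ => ?_
    ring
  have hC : ∑ i, ∑ j, F u i * F v j * L (l i) (l j) = L u v := by
    rw [← hexp, hrecon, hrecon]
  have step : ∀ i j : Fin r, L (l i) (l j) * (F u i - F u j) * (F v i - F v j)
      = F u i * F v i * L (l i) (l j) + F u j * F v j * L (l i) (l j)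
        - F u i * F v j * L (l i) (l j) - F u j * F v i * L (l i) (l j) :=
    fun i j => by ring
  simp only [step, Finset.sum_sub_distrib, Finset.sum_add_distrib]
  have hA : ∑ i, ∑ j, F u i * F v i * L (l i) (l j) = 0 :=
    Finset.sum_eq_zero fun i _ => by rw [← Finset.mul_sum, hrow i, mul_zero]
  have hB : ∑ i, ∑ j, F u j * F v j * L (l i) (l j) = 0 := by
    rw [Finset.sum_comm]
    exact Finset.sum_eq_zero fun j _ => by rw [← Finset.mul_sum, hcol j, mul_zero]
  have hD : ∑ i, ∑ j, F u j * F v i * L (l i) (l j) = L u v := by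
    rw [Finset.sum_comm]
    calc ∑ j, ∑ i, F u j * F v i * L (l i) (l j)
        = ∑ j, ∑ i, F u j * F v i * L (l j) (l i) := by
          refine Finset.sum_congr rfl fun j _ => Finset.sum_congr rfl fun i _ => ?_
          rw [hsymm (l i) (l j)]
      _ = L u v := by
          rw [← hexp, hrecon, hrecon]
  rw [hA, hB, hC, hD]
  ring

lemma kaenders_aux (r : ℕ) (hr : 2 ≤ r)
    (V : Type) [AddCommGroup V] [Module ℤ V]
    (L : V →ₗ[ℤ] V →ₗ[ℤ] ℤ) (hsymm : ∀ x y, L x y = L y x)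
    (l : Fin r → V)
    (hsum : ∑ i : Fin r, l i = 0)
    (hpos : ∀ i j : Fin r, i ≠ j → 0 < L (l i) (l j))
    (hbasis : ∀ j : Fin r, ∃ bb : Module.Basis {i : Fin r // i ≠ j} ℤ V, ∀ i, bb i = l (i : Fin r)) :
    ∃ F : V →ₗ[ℤ] (Fin r → ℤ),
      (∀ v : V, ∑ i, F v i • l i = v) ∧
      (∀ v : V, v ≠ 0 → L v v < 0) ∧
      (∀ m : Fin r → V, (∑ i : Fin r, m i = 0) →
        (∀ j : Fin r, ∃ bb : Module.Basis {i : Fin r // i ≠ j} ℤ V, ∀ i, bb i = m (i : Fin r)) →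
        ((∑ k, -(L (l k) (l k))) ≤ ∑ k, -(L (m k) (m k))) ∧
        ((∑ k, -(L (m k) (m k))) ≤ (∑ k, -(L (l k) (l k))) →
          ∀ i j : Fin r, i ≠ j → ∃ a b : Fin r, a ≠ b ∧
            ∀ k, F (m k) i - F (m k) j =
              (if k = a then 1 else 0) - (if k = b then 1 else 0))) := by
  have hj₀ : r - 1 < r := by omega
  set j₀ : Fin r := ⟨r - 1, hj₀⟩ with hj₀def
  obtain ⟨bb, hbb⟩ := hbasis j₀
  obtain ⟨F, hrecon, hFj₀, hFl⟩ := ksl_coords r V l j₀ bb hbb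
  have hrow : ∀ i, ∑ j, L (l i) (l j) = 0 := by
    intro i; rw [← map_sum, hsum, map_zero]
  refine ⟨F, hrecon, ?_, ?_⟩
  · -- negative definiteness
    intro v hv
    have hkey := ksl_key r V L hsymm l hsum F hrecon v v
    have hterm : ∀ i j, 0 ≤ L (l i) (l j) * (F v i - F v j) * (F v i - F v j) := by
      intro i j
      by_cases h : i = j
      · subst h; simp
      · rw [mul_assoc]
        exact mul_nonneg (hpos i j h).le (mul_self_nonneg _)
    have hex : ∃ i, F v i ≠ 0 := by
      by_contra h; push_neg at h
      exact hv (by rw [← hrecon v]; exact Finset.sum_eq_zero fun i _ => by rw [h i, zero_smul])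
    obtain ⟨i₀, hi₀⟩ := hex
    have hi₀j₀ : i₀ ≠ j₀ := fun h => hi₀ (h ▸ hFj₀ v)
    have htot : 0 < ∑ i, ∑ j, L (l i) (l j) * (F v i - F v j) * (F v i - F v j) := by
      refine Finset.sum_pos' (fun i _ => Finset.sum_nonneg fun j _ => hterm i j)
        ⟨i₀, Finset.mem_univ _, ?_⟩
      refine Finset.sum_pos' (fun j _ => hterm i₀ j) ⟨j₀, Finset.mem_univ _, ?_⟩
      rw [hFj₀ v, sub_zero, mul_assoc]
      exact mul_pos (hpos i₀ j₀ hi₀j₀) (mul_self_pos.mpr hi₀)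
    rw [hkey] at htot
    linarith
  · -- comparison with another admissible tuple
    intro m hsum_m hbasis_m
    have hw0 : ∀ i j : Fin r, ∑ k, (F (m k) i - F (m k) j) = 0 := by
      intro i j
      have hzero : ∀ t : Fin r, ∑ k, F (m k) t = 0 := by
        intro t
        calc ∑ k, F (m k) t = (∑ k, F (m k)) t := (Finset.sum_apply t _ _).symm
          _ = F (∑ k, m k) t := by rw [map_sum]
          _ = 0 := by rw [hsum_m, map_zero]; rfl
      rw [Finset.sum_sub_distrib, hzero i, hzero j, sub_zero]
    have hwne : ∀ i j : Fin r, i ≠ j → ∃ k, F (m k) i ≠ F (m k) j := by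
      intro i j hij
      by_contra h; push_neg at h
      obtain ⟨bm, hbm⟩ := hbasis_m j₀
      set g : V →ₗ[ℤ] ℤ :=
        (LinearMap.proj i).comp F - (LinearMap.proj j).comp F with hgdef
      have hgm : ∀ k : Fin r, g (m k) = 0 := by
        intro k
        simp only [hgdef, LinearMap.sub_apply, LinearMap.comp_apply, LinearMap.proj_apply]
        rw [h k, sub_self]
      have hgz : g = 0 := bm.ext fun s => by
        rw [hbm s, hgm (s : Fin r)]; rfl
      have hg0 : ∀ v : V, g v = 0 := fun v => by rw [hgz]; rfl
      by_cases hi : i = j₀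
      · have hjne : j ≠ j₀ := fun hc => hij (hi.trans hc.symm)
        have := hg0 (l j)
        simp only [hgdef, LinearMap.sub_apply, LinearMap.comp_apply, LinearMap.proj_apply] at this
        rw [hFl j hjne i, hFl j hjne j, if_neg hij, if_pos rfl] at this
        omega
      · have := hg0 (l i)
        simp only [hgdef, LinearMap.sub_apply, LinearMap.comp_apply, LinearMap.proj_apply] at this
        rw [hFl i hi i, hFl i hi j, if_pos rfl, if_neg (Ne.symm hij)] at this
        omega
    have hS2 : ∀ i j : Fin r, i ≠ j → 2 ≤ ∑ k, (F (m k) i - F (m k) j) ^ 2 := by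
      intro i j hij
      obtain ⟨k, hk⟩ := hwne i j hij
      exact ksl_sq2 (fun k => F (m k) i - F (m k) j) (hw0 i j) k (sub_ne_zero.mpr hk)
    have hQm : ∑ i, ∑ j, L (l i) (l j) * (∑ k, (F (m k) i - F (m k) j) ^ 2)
        = 2 * ∑ k, -(L (m k) (m k)) := by
      calc ∑ i, ∑ j, L (l i) (l j) * (∑ k, (F (m k) i - F (m k) j) ^ 2)
          = ∑ i, ∑ j, ∑ k, L (l i) (l j) * (F (m k) i - F (m k) j) * (F (m k) i - F (m k) j) := by
            refine Finset.sum_congr rfl fun i _ => Finset.sum_congr rfl fun j _ => ?_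
            rw [Finset.mul_sum]
            exact Finset.sum_congr rfl fun k _ => by ring
        _ = ∑ i, ∑ k, ∑ j, L (l i) (l j) * (F (m k) i - F (m k) j) * (F (m k) i - F (m k) j) := by
            exact Finset.sum_congr rfl fun i _ => Finset.sum_comm
        _ = ∑ k, ∑ i, ∑ j, L (l i) (l j) * (F (m k) i - F (m k) j) * (F (m k) i - F (m k) j) :=
            Finset.sum_comm
        _ = ∑ k, -(2 * L (m k) (m k)) :=
            Finset.sum_congr rfl fun k _ => ksl_key r V L hsymm l hsum F hrecon (m k) (m k)
        _ = 2 * ∑ k, -(L (m k) (m k)) := by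
            rw [Finset.mul_sum]
            exact Finset.sum_congr rfl fun k _ => by ring
    have hQl : ∑ i, ∑ j, L (l i) (l j) * (if i = j then 0 else 2)
        = 2 * ∑ k, -(L (l k) (l k)) := by
      have hinner : ∀ i, ∑ j, L (l i) (l j) * (if i = j then 0 else 2)
          = 2 * (-(L (l i) (l i))) := by
        intro i
        have h1 : ∀ j : Fin r, L (l i) (l j) * (if i = j then 0 else 2)
            = 2 * L (l i) (l j) - (if j = i then 2 * L (l i) (l j) else 0) := by
          intro j
          by_cases h : j = i
          · subst h; rw [if_pos rfl, if_pos rfl]; ring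
          · rw [if_neg (fun hc => h hc.symm), if_neg h]; ring
        rw [Finset.sum_congr rfl fun j _ => h1 j, Finset.sum_sub_distrib, ← Finset.mul_sum,
          hrow i, Finset.sum_ite_eq' Finset.univ i (fun j => 2 * L (l i) (l j)),
          if_pos (Finset.mem_univ i)]
        ring
      rw [Finset.sum_congr rfl fun i _ => hinner i, ← Finset.mul_sum]
    have hpw : ∀ i j : Fin r, L (l i) (l j) * (if i = j then 0 else 2)
        ≤ L (l i) (l j) * (∑ k, (F (m k) i - F (m k) j) ^ 2) := by
      intro i j
      by_cases h : i = j
      · subst h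
        simp
      · rw [if_neg h]
        exact mul_le_mul_of_nonneg_left (hS2 i j h) (hpos i j h).le
    have hineq : (∑ k, -(L (l k) (l k))) ≤ ∑ k, -(L (m k) (m k)) := by
      have := Finset.sum_le_sum (s := Finset.univ)
        (fun i _ => Finset.sum_le_sum (s := Finset.univ) (fun j _ => hpw i j))
      rw [hQl, hQm] at this
      linarith
    refine ⟨hineq, ?_⟩
    intro hle i j hij
    have hSeq : ∑ k, (F (m k) i - F (m k) j) ^ 2 = 2 := by
      by_contra hS
      have hSlt : 2 < ∑ k, (F (m k) i - F (m k) j) ^ 2 :=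
        lt_of_le_of_ne (hS2 i j hij) (Ne.symm hS)
      have hstrict : ∑ i, ∑ j, L (l i) (l j) * (if i = j then 0 else 2)
          < ∑ i, ∑ j, L (l i) (l j) * (∑ k, (F (m k) i - F (m k) j) ^ 2) := by
        refine Finset.sum_lt_sum (fun i _ => Finset.sum_le_sum (fun j _ => hpw i j))
          ⟨i, Finset.mem_univ _, ?_⟩
        refine Finset.sum_lt_sum (fun j _ => hpw i j) ⟨j, Finset.mem_univ _, ?_⟩
        rw [if_neg hij]
        exact mul_lt_mul_of_pos_left hSlt (hpos i j hij)
      rw [hQl, hQm] at hstrict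
      linarith
    exact ksl_pair (fun k => F (m k) i - F (m k) j) (hw0 i j) hSeq

/-- Kaenders' theorem: let `V` be a free ℤ-module of rank `r−1` with a symmetric
bilinear form `L`, and let `(l₁,…,l_r)` be a tuple with `Σ l_i = 0`, `L(l_i,l_j) > 0`
for `i ≠ j`, such that omitting any one entry yields a ℤ-basis of `V`.  Then `L` is
negative definite on `V`, and the set `{l₁,…,l_r}` is determined by `(V,L)` up to a
common sign. -/
theorem kaenders_selling (r : ℕ) (hr : 2 ≤ r)
    (V : Type) [AddCommGroup V] [Module ℤ V] [Module.Free ℤ V] [Module.Finite ℤ V]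
    (hrk : Module.finrank ℤ V = r - 1)
    (L : V →ₗ[ℤ] V →ₗ[ℤ] ℤ) (hsymm : ∀ x y, L x y = L y x)
    (l : Fin r → V)
    (hsum : ∑ i : Fin r, l i = 0)
    (hpos : ∀ i j : Fin r, i ≠ j → 0 < L (l i) (l j))
    (hbasis : ∀ j : Fin r, ∃ bb : Module.Basis {i : Fin r // i ≠ j} ℤ V, ∀ i, bb i = l (i : Fin r)) :
    (∀ v : V, v ≠ 0 → L v v < 0) ∧
    (∀ l' : Fin r → V,
      (∑ i : Fin r, l' i = 0) →
      (∀ i j : Fin r, i ≠ j → 0 < L (l' i) (l' j)) →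
      (∀ j : Fin r, ∃ bb : Module.Basis {i : Fin r // i ≠ j} ℤ V, ∀ i, bb i = l' (i : Fin r)) →
      Set.range l' = Set.range l ∨ Set.range l' = Set.range (fun i => -(l i))) := by
  obtain ⟨F, hrecon, hneg, hcomp⟩ := kaenders_aux r hr V L hsymm l hsum hpos hbasis
  refine ⟨hneg, ?_⟩
  intro l' hsum' hpos' hbasis'
  obtain ⟨F', hrecon', hneg', hcomp'⟩ := kaenders_aux r hr V L hsymm l' hsum' hpos' hbasis'
  obtain ⟨h1, hpext⟩ := hcomp l' hsum' hbasis'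
  have h2 := (hcomp' l hsum hbasis).1
  have hpair := hpext (by linarith)
  have hj₀lt : r - 1 < r := by omega
  set j₀ : Fin r := ⟨r - 1, hj₀lt⟩ with hj₀def
  have hch : ∀ i : {i : Fin r // i ≠ j₀}, ∃ a b : Fin r, a ≠ b ∧
      ∀ k, F (l' k) (i : Fin r) - F (l' k) j₀ =
        (if k = a then 1 else 0) - (if k = b then 1 else 0) :=
    fun i => hpair (i : Fin r) j₀ i.2
  choose A B hAB hform using hch
  have hdich : ∀ i i' : {i : Fin r // i ≠ j₀}, i ≠ i' →
      (A i = A i' ∧ B i ≠ B i') ∨ (B i = B i' ∧ A i ≠ A i') := by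
    intro i i' hne
    have hne' : (i : Fin r) ≠ (i' : Fin r) := fun h => hne (Subtype.ext h)
    obtain ⟨x, y, hxy, hx⟩ := hpair (i : Fin r) (i' : Fin r) hne'
    refine ksl_dich (A i) (B i) (A i') (B i') x y (hAB i) (hAB i') hxy ?_
    intro k
    rw [← hform i k, ← hform i' k, ← hx k]
    ring
  have hi₀ : ((⟨0, by omega⟩ : Fin r) : Fin r) ≠ j₀ := by
    rw [hj₀def]
    simp only [ne_eq, Fin.mk.injEq]
    omega
  set i₀ : {i : Fin r // i ≠ j₀} := ⟨⟨0, by omega⟩, hi₀⟩ with hi₀def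
  have hconst : ∀ c : ℤ, ∑ i, c • l i = (0 : V) := by
    intro c
    have hmap := map_sum (AddMonoidHom.mk' (fun x : V => c • x) (fun a b => zsmul_add a b c))
      l Finset.univ
    simpa [hsum, zsmul_zero] using hmap.symm
  rcases ksl_glob A B hdich with hallA | hallB
  · -- all A equal : l' k = - l (σ k)
    set α := A i₀ with hαdef
    set bmap : Fin r → Fin r := fun i => if h : i = j₀ then α else B ⟨i, h⟩ with hbmapdef
    have hbform : ∀ k i : Fin r, F (l' k) i =
        (F (l' k) j₀ + (if k = α then 1 else 0)) - (if k = bmap i then 1 else 0) := by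
      intro k i
      by_cases h : i = j₀
      · subst h
        simp only [hbmapdef, dif_pos rfl]
        ring
      · simp only [hbmapdef, dif_neg h]
        have hf := hform ⟨i, h⟩ k
        have hA : A ⟨i, h⟩ = α := hallA _ i₀
        rw [hA] at hf
        linarith [hf]
    have hinj : Function.Injective bmap := by
      intro i i' h
      by_cases h1 : i = j₀ <;> by_cases h2 : i' = j₀
      · rw [h1, h2]
      · exfalso
        simp only [hbmapdef, dif_pos h1, dif_neg h2] at h
        exact hAB ⟨i', h2⟩ ((hallA ⟨i', h2⟩ i₀).trans h)
      · exfalso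
        simp only [hbmapdef, dif_neg h1, dif_pos h2] at h
        exact hAB ⟨i, h1⟩ ((hallA ⟨i, h1⟩ i₀).trans h.symm)
      · simp only [hbmapdef, dif_neg h1, dif_neg h2] at h
        by_contra hne
        have hsne : (⟨i, h1⟩ : {i : Fin r // i ≠ j₀}) ≠ ⟨i', h2⟩ :=
          fun hc => hne (congrArg Subtype.val hc)
        rcases hdich _ _ hsne with ⟨_, hB⟩ | ⟨hB, hA⟩
        · exact hB h
        · exact hA (hallA _ _)
    have hbij := (Finite.injective_iff_bijective).mp hinj
    set e : Fin r ≃ Fin r := Equiv.ofBijective bmap hbij with hedef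
    have hbe : ∀ i, bmap i = e i := fun i => rfl
    have hl' : ∀ k, l' k = -(l (e.symm k)) := by
      intro k
      have h1 : l' k = ∑ i, F (l' k) i • l i := (hrecon (l' k)).symm
      rw [h1]
      calc ∑ i, F (l' k) i • l i
          = ∑ i, ((F (l' k) j₀ + (if k = α then 1 else 0)) • l i
              - (if k = bmap i then (1:ℤ) else 0) • l i) := by
            refine Finset.sum_congr rfl fun i _ => ?_
            rw [hbform k i, sub_zsmul]
            abel
        _ = ∑ i, (F (l' k) j₀ + (if k = α then 1 else 0)) • l i
              - ∑ i, (if k = bmap i then (1:ℤ) else 0) • l i := by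
            rw [Finset.sum_sub_distrib]
        _ = - ∑ i, (if k = bmap i then (1:ℤ) else 0) • l i := by
            rw [hconst, zero_sub]
        _ = - ∑ i, (if i = e.symm k then l i else 0) := by
            refine congrArg Neg.neg (Finset.sum_congr rfl fun i _ => ?_)
            by_cases h : i = e.symm k
            · have hk : k = bmap i := by
                rw [hbe, h]
                exact (e.apply_symm_apply k).symm
              rw [if_pos hk, if_pos h, one_zsmul]
            · have hk : ¬(k = bmap i) := by
                intro hc
                exact h ((Equiv.symm_apply_eq e).mpr ((hbe i) ▸ hc)).symm
              rw [if_neg hk, if_neg h, zero_zsmul]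
        _ = -(l (e.symm k)) := by
            rw [Finset.sum_ite_eq' Finset.univ (e.symm k) l, if_pos (Finset.mem_univ _)]
    right
    have : l' = (fun i => -(l i)) ∘ e.symm := funext hl'
    rw [this]
    exact Function.Surjective.range_comp e.symm.surjective _
  · -- all B equal : l' k = l (σ k)
    set β := B i₀ with hβdef
    set amap : Fin r → Fin r := fun i => if h : i = j₀ then β else A ⟨i, h⟩ with hamapdef
    have haform : ∀ k i : Fin r, F (l' k) i =
        (F (l' k) j₀ - (if k = β then 1 else 0)) + (if k = amap i then 1 else 0) := by
      intro k i
      by_cases h : i = j₀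
      · subst h
        simp only [hamapdef, dif_pos rfl]
        ring
      · simp only [hamapdef, dif_neg h]
        have hf := hform ⟨i, h⟩ k
        have hB : B ⟨i, h⟩ = β := hallB _ i₀
        rw [hB] at hf
        linarith [hf]
    have hinj : Function.Injective amap := by
      intro i i' h
      by_cases h1 : i = j₀ <;> by_cases h2 : i' = j₀
      · rw [h1, h2]
      · exfalso
        simp only [hamapdef, dif_pos h1, dif_neg h2] at h
        exact hAB ⟨i', h2⟩ (h.symm.trans (hallB ⟨i', h2⟩ i₀).symm)
      · exfalso
        simp only [hamapdef, dif_neg h1, dif_pos h2] at h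
        exact hAB ⟨i, h1⟩ (h.trans (hallB ⟨i, h1⟩ i₀).symm)
      · simp only [hamapdef, dif_neg h1, dif_neg h2] at h
        by_contra hne
        have hsne : (⟨i, h1⟩ : {i : Fin r // i ≠ j₀}) ≠ ⟨i', h2⟩ :=
          fun hc => hne (congrArg Subtype.val hc)
        rcases hdich _ _ hsne with ⟨hA, hB⟩ | ⟨_, hA⟩
        · exact hB (hallB _ _)
        · exact hA h
    have hbij := (Finite.injective_iff_bijective).mp hinj
    set e : Fin r ≃ Fin r := Equiv.ofBijective amap hbij with hedef
    have hae : ∀ i, amap i = e i := fun i => rfl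
    have hl' : ∀ k, l' k = l (e.symm k) := by
      intro k
      have h1 : l' k = ∑ i, F (l' k) i • l i := (hrecon (l' k)).symm
      rw [h1]
      calc ∑ i, F (l' k) i • l i
          = ∑ i, ((F (l' k) j₀ - (if k = β then 1 else 0)) • l i
              + (if k = amap i then (1:ℤ) else 0) • l i) := by
            refine Finset.sum_congr rfl fun i _ => ?_
            rw [haform k i, add_zsmul]
        _ = ∑ i, (F (l' k) j₀ - (if k = β then 1 else 0)) • l i
              + ∑ i, (if k = amap i then (1:ℤ) else 0) • l i := by
            rw [Finset.sum_add_distrib]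
        _ = ∑ i, (if k = amap i then (1:ℤ) else 0) • l i := by
            rw [hconst, zero_add]
        _ = ∑ i, (if i = e.symm k then l i else 0) := by
            refine Finset.sum_congr rfl fun i _ => ?_
            by_cases h : i = e.symm k
            · have hk : k = amap i := by
                rw [hae, h]
                exact (e.apply_symm_apply k).symm
              rw [if_pos hk, if_pos h, one_zsmul]
            · have hk : ¬(k = amap i) := by
                intro hc
                exact h ((Equiv.symm_apply_eq e).mpr ((hae i) ▸ hc)).symm
              rw [if_neg hk, if_neg h, zero_zsmul]
        _ = l (e.symm k) := by
            rw [Finset.sum_ite_eq' Finset.univ (e.symm k) l, if_pos (Finset.mem_univ _)]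
    left
    have : l' = l ∘ e.symm := funext hl'
    rw [this]
    exact Function.Surjective.range_comp e.symm.surjective _
end

section
/- With V_ℤ, L_ℤ, l, ξ, V_{ℤ[ξ]} and L_ℂ as in the context, assume moreover m ≥ 3 (so l ∈ {3,4}). Then {r ∈ V_{ℤ[ξ]} : L_ℂ(r, r) = m and r ∉ ℤ[ξ]·b₁} = {ε·ξ^k·r₀ : ε ∈ {±1}, k ∈ ℤ, r₀ ∈ V_ℤ with L_ℤ(r₀, r₀) = m and r₀ ∉ ℤ·b₁}. -/
/-- The symmetric bilinear form on `ℤ²` with Gram matrix `[[2, −1], [−1, m]]`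
with respect to the standard basis `b₁ = (1,0)`, `b₂ = (0,1)`. -/
def Lz (m : ℤ) (v w : Fin 2 → ℤ) : ℤ :=
  2 * v 0 * w 0 - v 0 * w 1 - v 1 * w 0 + m * v 1 * w 1

/-- The sesquilinear extension of `Lz m` to `ℂ²` (linear in the first argument,
conjugate-linear in the second). -/
def Lc (m : ℤ) (v w : Fin 2 → ℂ) : ℂ :=
  2 * v 0 * (starRingEnd ℂ) (w 0) - v 0 * (starRingEnd ℂ) (w 1)
    - v 1 * (starRingEnd ℂ) (w 0) + (m : ℂ) * v 1 * (starRingEnd ℂ) (w 1)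

lemma memClosureForm (ξ : ℂ) (e : ℤ) (hξ2 : ξ^2 = (e : ℂ)*ξ - 1) (a : ℂ)
    (ha : a ∈ Subring.closure ({ξ} : Set ℂ)) : ∃ p q : ℤ, a = (p : ℂ) + q * ξ := by
  induction ha using Subring.closure_induction with
  | mem x hx =>
    rw [Set.mem_singleton_iff] at hx
    exact ⟨0, 1, by simp [hx]⟩
  | zero => exact ⟨0, 0, by simp⟩
  | one => exact ⟨1, 0, by simp⟩
  | add x y hx hy ihx ihy =>
    obtain ⟨p, q, rfl⟩ := ihx; obtain ⟨p', q', rfl⟩ := ihy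
    exact ⟨p + p', q + q', by push_cast; ring⟩
  | neg x hx ih =>
    obtain ⟨p, q, rfl⟩ := ih
    exact ⟨-p, -q, by push_cast; ring⟩
  | mul x y hx hy ihx ihy =>
    obtain ⟨p, q, rfl⟩ := ihx; obtain ⟨p', q', rfl⟩ := ihy
    refine ⟨p * p' - q * q', p * q' + p' * q + e * (q * q'), ?_⟩
    push_cast
    linear_combination (q : ℂ) * q' * hξ2

lemma sqZeroInt (q : ℤ) (h : q^2 ≤ 0) : q = 0 := by nlinarith [sq_nonneg q]

lemma normZero (e : ℤ) (he : e = -1 ∨ e = 0) (p q : ℤ)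
    (h : p^2 + e*(p*q) + q^2 = 0) : p = 0 ∧ q = 0 := by
  have hq : q = 0 := by
    apply sqZeroInt
    rcases he with rfl | rfl
    · nlinarith [sq_nonneg (2*p - q)]
    · nlinarith [sq_nonneg p]
  subst hq
  have hp : p = 0 := by apply sqZeroInt; rcases he with rfl | rfl <;> nlinarith
  exact ⟨hp, rfl⟩

lemma normNonneg (e : ℤ) (he : e = -1 ∨ e = 0) (p q : ℤ) :
    0 ≤ p^2 + e*(p*q) + q^2 := by
  rcases he with rfl | rfl
  · nlinarith [sq_nonneg (p - q), sq_nonneg (p + q)]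
  · nlinarith [sq_nonneg p, sq_nonneg q]

lemma intKey (e m : ℤ) (he : e = -1 ∨ e = 0) (hm : 3 ≤ m) (p q s t : ℤ)
    (hst : ¬(s = 0 ∧ t = 0))
    (hE : (p^2 + e*(p*q) + q^2) + ((p-s)^2 + e*((p-s)*(q-t)) + (q-t)^2)
        + (m-1)*(s^2 + e*(s*t) + t^2) = m) :
    ((p = 0 ∧ q = 0) ∨ (p = s ∧ q = t)) ∧ (s^2 + e*(s*t) + t^2 = 1) := by
  have hA := normNonneg e he p q
  have hB := normNonneg e he (p - s) (q - t)
  have hC0 := normNonneg e he s t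
  have hC : 1 ≤ s^2 + e*(s*t) + t^2 := by
    rcases eq_or_lt_of_le hC0 with h1 | h1
    · exact absurd (normZero e he s t h1.symm) hst
    · omega
  have hC1 : s^2 + e*(s*t) + t^2 = 1 := by nlinarith
  refine ⟨?_, hC1⟩
  have hAB : (p^2 + e*(p*q) + q^2) + ((p-s)^2 + e*((p-s)*(q-t)) + (q-t)^2) = 1 := by
    nlinarith
  rcases (by omega : (p^2 + e*(p*q) + q^2) = 0 ∨ ((p-s)^2 + e*((p-s)*(q-t)) + (q-t)^2) = 0) with h | h
  · exact Or.inl (normZero e he p q h)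
  · have := normZero e he (p - s) (q - t) h
    exact Or.inr ⟨by omega, by omega⟩

lemma unitEnum (e : ℤ) (he : e = -1 ∨ e = 0) (s t : ℤ) (h : s^2 + e*(s*t) + t^2 = 1) :
    (s = 1 ∧ t = 0) ∨ (s = -1 ∧ t = 0) ∨ (s = 0 ∧ t = 1) ∨ (s = 0 ∧ t = -1) ∨
      (e = -1 ∧ ((s = 1 ∧ t = 1) ∨ (s = -1 ∧ t = -1))) := by
  have hs1 : -1 ≤ s := by
    by_contra hc; push_neg at hc
    rcases he with rfl | rfl
    · nlinarith [sq_nonneg (s - t), sq_nonneg (s + t), sq_nonneg (2*t - s)]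
    · nlinarith [sq_nonneg t]
  have hs2 : s ≤ 1 := by
    by_contra hc; push_neg at hc
    rcases he with rfl | rfl
    · nlinarith [sq_nonneg (s - t), sq_nonneg (s + t), sq_nonneg (2*t - s)]
    · nlinarith [sq_nonneg t]
  have ht1 : -1 ≤ t := by
    by_contra hc; push_neg at hc
    rcases he with rfl | rfl
    · nlinarith [sq_nonneg (s - t), sq_nonneg (s + t), sq_nonneg (2*s - t)]
    · nlinarith [sq_nonneg s]
  have ht2 : t ≤ 1 := by
    by_contra hc; push_neg at hc
    rcases he with rfl | rfl
    · nlinarith [sq_nonneg (s - t), sq_nonneg (s + t), sq_nonneg (2*s - t)]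
    · nlinarith [sq_nonneg s]
  rcases he with rfl | rfl <;> interval_cases s <;> interval_cases t <;> simp_all

lemma unitForm (ξ : ℂ) (e : ℤ) (hξ2 : ξ^2 = (e : ℂ)*ξ - 1)
    (s t : ℤ)
    (henum : (s = 1 ∧ t = 0) ∨ (s = -1 ∧ t = 0) ∨ (s = 0 ∧ t = 1) ∨ (s = 0 ∧ t = -1) ∨
      (e = -1 ∧ ((s = 1 ∧ t = 1) ∨ (s = -1 ∧ t = -1)))) :
    ∃ (ε : ℤˣ) (k : ℤ), (s : ℂ) + t * ξ = ((ε : ℤ) : ℂ) * ξ ^ k := by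
  have h2 : ξ ^ (2:ℤ) = ξ ^ (2:ℕ) := zpow_natCast ξ 2
  rcases henum with ⟨rfl, rfl⟩ | ⟨rfl, rfl⟩ | ⟨rfl, rfl⟩ | ⟨rfl, rfl⟩ | ⟨rfl, h⟩
  · exact ⟨1, 0, by norm_num⟩
  · exact ⟨-1, 0, by norm_num⟩
  · exact ⟨1, 1, by norm_num⟩
  · exact ⟨-1, 1, by norm_num⟩
  · push_cast at hξ2
    rcases h with ⟨rfl, rfl⟩ | ⟨rfl, rfl⟩
    · refine ⟨-1, 2, ?_⟩
      rw [h2]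
      push_cast
      linear_combination hξ2
    · refine ⟨1, 2, ?_⟩
      rw [h2]
      push_cast
      linear_combination -hξ2

/-- For `m ≥ 3`, the elements `r` of `V_{ℤ[ξ]} = ℤ[ξ]b₁ + ℤ[ξ]b₂ ⊆ ℂ²` with
`L_ℂ(r,r) = m` and `r ∉ ℤ[ξ]·b₁` are exactly the products `±ξ^k · r₀` with `r₀ ∈ ℤ²`
satisfying `L_ℤ(r₀,r₀) = m` and `r₀ ∉ ℤ·b₁`. -/
theorem norm_m_vectors (m : ℤ) (hm : 2 ≤ m) (l : ℕ) (hl : l ∈ ({3, 4, 5} : Set ℕ))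
    (hl5 : l = 5 → m = 2) (ξ : ℂ) (hξ : ξ = Complex.exp (2 * Real.pi * Complex.I / l))
    (hm3 : 3 ≤ m) :
    {r : Fin 2 → ℂ | (∀ i, r i ∈ Subring.closure ({ξ} : Set ℂ)) ∧ Lc m r r = (m : ℂ) ∧
        ¬ ∃ c ∈ Subring.closure ({ξ} : Set ℂ), r = fun i => if i = 0 then c else 0}
      = {r | ∃ (ε : ℤˣ) (k : ℤ) (r₀ : Fin 2 → ℤ), Lz m r₀ r₀ = m ∧
          (¬ ∃ c : ℤ, r₀ = fun i => if i = 0 then c else 0) ∧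
          r = fun i => ((ε : ℤ) : ℂ) * ξ ^ k * (r₀ i : ℂ)} := by
  have hl34 : l = 3 ∨ l = 4 := by
    simp only [Set.mem_insert_iff, Set.mem_singleton_iff] at hl
    rcases hl with rfl | rfl | rfl
    · exact Or.inl rfl
    · exact Or.inr rfl
    · omega
  -- the quadratic relation satisfied by ξ
  obtain ⟨e, he, hξ2⟩ : ∃ e : ℤ, (e = -1 ∨ e = 0) ∧ ξ^2 = (e : ℂ)*ξ - 1 := by
    rcases hl34 with rfl | rfl
    · refine ⟨-1, Or.inl rfl, ?_⟩
      have h3 : ξ ^ 3 = 1 := by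
        rw [hξ, ← Complex.exp_nat_mul]
        rw [show (3:ℕ) * (2 * (Real.pi:ℂ) * Complex.I / ((3:ℕ):ℂ)) = 2 * Real.pi * Complex.I by
          push_cast; ring]
        exact Complex.exp_two_pi_mul_I
      have hne : ξ ≠ 1 := by
        intro h
        have him : ξ.im = Real.sin (2 * Real.pi / 3) := by
          rw [hξ, show (2 * (Real.pi:ℂ) * Complex.I / ((3:ℕ):ℂ) : ℂ)
              = ((2 * Real.pi / 3 : ℝ) : ℂ) * Complex.I by push_cast; ring]
          exact Complex.exp_ofReal_mul_I_im _
        have hpos : 0 < Real.sin (2 * Real.pi / 3) := by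
          apply Real.sin_pos_of_pos_of_lt_pi <;> nlinarith [Real.pi_pos]
        rw [h] at him
        simp at him
        linarith
      have hfac : (ξ - 1) * (ξ ^ 2 + ξ + 1) = 0 := by linear_combination h3
      have h0 : ξ ^ 2 + ξ + 1 = 0 := by
        rcases mul_eq_zero.mp hfac with h | h
        · exact absurd (sub_eq_zero.mp h) hne
        · exact h
      push_cast
      linear_combination h0
    · refine ⟨0, Or.inr rfl, ?_⟩
      have h2 : ξ ^ 2 = -1 := by
        rw [hξ, ← Complex.exp_nat_mul]
        rw [show (2:ℕ) * (2 * (Real.pi:ℂ) * Complex.I / ((4:ℕ):ℂ)) = Real.pi * Complex.I by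
          push_cast; ring]
        exact Complex.exp_pi_mul_I
      rw [h2]; push_cast; ring
  have hnorm : ξ * (starRingEnd ℂ) ξ = 1 := by
    rw [hξ, ← Complex.exp_conj, ← Complex.exp_add]
    rw [show (starRingEnd ℂ) (2 * (Real.pi:ℂ) * Complex.I / (l:ℂ))
        = -(2 * (Real.pi:ℂ) * Complex.I / (l:ℂ)) by
      simp [map_div₀, Complex.conj_I, map_ofNat]; ring]
    simp
  have hξ0 : ξ ≠ 0 := by
    intro h; rw [h] at hξ2; norm_num at hξ2
  have h1 : ξ * ((e:ℂ) - ξ) = 1 := by linear_combination -hξ2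
  have hconj : (starRingEnd ℂ) ξ = (e:ℂ) - ξ := mul_left_cancel₀ hξ0 (hnorm.trans h1.symm)
  have hconjinv : (starRingEnd ℂ) ξ = ξ⁻¹ := by
    rw [hconj]; exact (inv_eq_of_mul_eq_one_right h1).symm
  have hzpow : ∀ k : ℤ, ξ ^ k ∈ Subring.closure ({ξ} : Set ℂ) := by
    intro k
    have hxmem : ξ ∈ Subring.closure ({ξ} : Set ℂ) := Subring.subset_closure rfl
    have hinvmem : ξ⁻¹ ∈ Subring.closure ({ξ} : Set ℂ) := by
      rw [← hconjinv, hconj]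
      exact sub_mem (intCast_mem _ e) hxmem
    rcases k with n | n
    · simpa using pow_mem hxmem n
    · rw [zpow_negSucc, ← inv_pow]; exact pow_mem hinvmem (n+1)
  ext r
  simp only [Set.mem_setOf_eq]
  constructor
  · rintro ⟨hmem, hLc, hnot⟩
    obtain ⟨p, q, ha⟩ := memClosureForm ξ e hξ2 (r 0) (hmem 0)
    obtain ⟨s, t, hb⟩ := memClosureForm ξ e hξ2 (r 1) (hmem 1)
    have hst : ¬(s = 0 ∧ t = 0) := by
      rintro ⟨rfl, rfl⟩
      exact hnot ⟨r 0, hmem 0, by funext i; fin_cases i <;> simp [hb]⟩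
    have hE : (p^2 + e*(p*q) + q^2) + ((p-s)^2 + e*((p-s)*(q-t)) + (q-t)^2)
        + (m-1)*(s^2 + e*(s*t) + t^2) = m := by
      have hC : (((p^2 + e*(p*q) + q^2) + ((p-s)^2 + e*((p-s)*(q-t)) + (q-t)^2)
          + (m-1)*(s^2 + e*(s*t) + t^2) : ℤ) : ℂ) = ((m : ℤ) : ℂ) := by
        rw [show ((m : ℤ) : ℂ) = (m : ℂ) from rfl, ← hLc]
        simp only [Lc, ha, hb, map_add, map_mul, map_intCast, hconj]
        push_cast
        linear_combination (2*(q:ℂ)^2 - 2*(q:ℂ)*(t:ℂ) + (m:ℂ)*(t:ℂ)^2) * hξ2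
      exact_mod_cast hC
    obtain ⟨hd, hC1⟩ := intKey e m he hm3 p q s t hst hE
    obtain ⟨ε, k, hu⟩ := unitForm ξ e hξ2 s t (unitEnum e he s t hC1)
    rcases hd with ⟨rfl, rfl⟩ | ⟨rfl, rfl⟩
    · refine ⟨ε, k, ![0, 1], ?_, ?_, ?_⟩
      · simp [Lz]
      · rintro ⟨c, hc⟩
        have := congrFun hc 1
        simp at this
      · funext i; fin_cases i
        · show r 0 = ((ε:ℤ):ℂ) * ξ^k * ((![0, 1] 0 : ℤ) : ℂ)
          rw [ha]; norm_num
        · show r 1 = ((ε:ℤ):ℂ) * ξ^k * ((![0, 1] 1 : ℤ) : ℂ)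
          rw [hb, hu]; norm_num
    · refine ⟨ε, k, ![1, 1], ?_, ?_, ?_⟩
      · simp [Lz]
      · rintro ⟨c, hc⟩
        have := congrFun hc 1
        simp at this
      · funext i; fin_cases i
        · show r 0 = ((ε:ℤ):ℂ) * ξ^k * ((![1, 1] 0 : ℤ) : ℂ)
          rw [ha, hu]; norm_num
        · show r 1 = ((ε:ℤ):ℂ) * ξ^k * ((![1, 1] 1 : ℤ) : ℂ)
          rw [hb, hu]; norm_num
  · rintro ⟨ε, k, r₀, hLz, hr₀, rfl⟩
    have hznz : ξ ^ k ≠ 0 := zpow_ne_zero k hξ0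
    have heps : ((ε:ℤ):ℂ) * ((ε:ℤ):ℂ) = 1 := by
      rcases Int.units_eq_one_or ε with h | h <;> rw [h] <;> norm_num
    have hepsnz : ((ε:ℤ):ℂ) ≠ 0 := by
      rcases Int.units_eq_one_or ε with h | h <;> rw [h] <;> norm_num
    refine ⟨?_, ?_, ?_⟩
    · intro i
      exact mul_mem (mul_mem (intCast_mem _ (ε:ℤ)) (hzpow k)) (intCast_mem _ (r₀ i))
    · have hexp : Lc m (fun i => ((ε:ℤ):ℂ) * ξ^k * (r₀ i : ℂ))
          (fun i => ((ε:ℤ):ℂ) * ξ^k * (r₀ i : ℂ))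
          = (((ε:ℤ):ℂ) * ((ε:ℤ):ℂ)) * (ξ^k * (ξ^k)⁻¹) * ((Lz m r₀ r₀ : ℤ) : ℂ) := by
        simp only [Lc, Lz, map_mul, map_intCast, map_zpow₀, hconjinv, inv_zpow]
        push_cast
        ring
      rw [hexp, heps, mul_inv_cancel₀ hznz, one_mul, one_mul, hLz]
    · rintro ⟨c, hcR, hc⟩
      have h1 := congrFun hc 1
      simp only [Fin.isValue, one_ne_zero, if_neg (by decide : (1 : Fin 2) ≠ 0)] at h1
      have h2 : (r₀ 1 : ℂ) = 0 := by
        rcases mul_eq_zero.mp h1 with h | h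
        · exact absurd h (mul_ne_zero hepsnz hznz)
        · exact h
      have h3 : r₀ 1 = 0 := by exact_mod_cast h2
      exact hr₀ ⟨r₀ 0, by funext i; fin_cases i <;> simp [h3]⟩
end

section
/- Let p ≥ 1 be an integer, H a free ℤ-module of finite rank, H′ ⊆ H a submodule, and δ, δ′ ∈ H with H = H′ ⊕ ℤδ ⊕ ℤδ′. Let γ₁, γ₂ ∈ H′ be ℚ-linearly independent elements such that, inside H⊗ℚ, one has (ℚγ₁ + ℚγ₂) ∩ H = ℤγ₁ ⊕ ℤγ₂. Set b₁ := γ₁ + p·δ and b₂ := γ₂ + p·δ′; then H⊗ℚ = (H′⊗ℚ) ⊕ ℚb₁ ⊕ ℚb₂. For A = [[a, b], [c, d]] ∈ SL(2,ℤ), let f_A be the unique ℚ-linear automorphism of H⊗ℚ with f_A|_{H′⊗ℚ} = id, f_A(b₁) = a·b₁ + c·b₂ and f_A(b₂) = b·b₁ + d·b₂. Then f_A(H) ⊆ H if and only if A ≡ I₂ (mod p). -/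
open TensorProduct

private lemma exists_proj {H : Type} [AddCommGroup H]
    (H' : Submodule ℤ H) (δ δ' : H)
    (hdec : ∀ x : H, ∃! t : H' × ℤ × ℤ, x = (t.1 : H) + t.2.1 • δ + t.2.2 • δ') :
    ∃ (ρ : H →ₗ[ℤ] H) (π π' : H →ₗ[ℤ] ℤ),
      ∀ x : H, ρ x ∈ H' ∧ x = ρ x + π x • δ + π' x • δ' := by
  classical
  have hF : ∀ x : H, x = (((hdec x).exists.choose).1 : H) +
      ((hdec x).exists.choose).2.1 • δ + ((hdec x).exists.choose).2.2 • δ' :=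
    fun x => (hdec x).exists.choose_spec
  set F : H → H' × ℤ × ℤ := fun x => (hdec x).exists.choose with hFdef
  have hFu : ∀ (x : H) (t : H' × ℤ × ℤ), x = (t.1 : H) + t.2.1 • δ + t.2.2 • δ' → F x = t :=
    fun x t ht => (hdec x).unique (hF x) ht
  have haddF : ∀ x y : H, F (x + y) = F x + F y := by
    intro x y
    apply hFu
    show x + y = (((F x).1 + (F y).1 : H') : H) + ((F x).2.1 + (F y).2.1) • δ
        + ((F x).2.2 + (F y).2.2) • δ'
    rw [Submodule.coe_add, add_zsmul, add_zsmul]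
    conv_lhs => rw [hF x, hF y]
    abel
  have hsmulF : ∀ (k : ℤ) (x : H), F (k • x) = k • F x := by
    intro k x
    apply hFu
    show k • x = k • ((F x).1 : H) + (k * (F x).2.1) • δ + (k * (F x).2.2) • δ'
    rw [mul_zsmul, mul_zsmul]
    conv_lhs => rw [hF x]
    rw [smul_add, smul_add]
  refine ⟨⟨⟨fun x => ((F x).1 : H), ?_⟩, ?_⟩,
          ⟨⟨fun x => (F x).2.1, ?_⟩, ?_⟩,
          ⟨⟨fun x => (F x).2.2, ?_⟩, ?_⟩,
          fun x => ⟨(F x).1.2, hF x⟩⟩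
  · intro x y; exact congrArg (fun t => ((t.1 : H))) (haddF x y)
  · intro k x; exact congrArg (fun t => ((t.1 : H))) (hsmulF k x)
  · intro x y; exact congrArg (fun t => t.2.1) (haddF x y)
  · intro k x; exact congrArg (fun t => t.2.1) (hsmulF k x)
  · intro x y; exact congrArg (fun t => t.2.2) (haddF x y)
  · intro k x; exact congrArg (fun t => t.2.2) (hsmulF k x)

/-- Let `H` be a free ℤ-module of finite rank, `H' ⊆ H` a submodule and `δ, δ'` elements
with `H = H' ⊕ ℤδ ⊕ ℤδ'`.  Let `γ₁, γ₂ ∈ H'` be ℚ-linearly independent in `H ⊗ ℚ` with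
`(ℚγ₁ + ℚγ₂) ∩ H = ℤγ₁ ⊕ ℤγ₂`, and set `b₁ := γ₁ + pδ`, `b₂ := γ₂ + pδ'`.  Then
`H⊗ℚ = (H'⊗ℚ) ⊕ ℚb₁ ⊕ ℚb₂`, and for `A = [[a,b],[c,d]] ∈ SL(2,ℤ)` the ℚ-linear
automorphism `f_A` of `H⊗ℚ` which is the identity on `H'⊗ℚ` and sends
`b₁ ↦ a·b₁ + c·b₂`, `b₂ ↦ b·b₁ + d·b₂` maps `H` into `H` if and only if
`A ≡ I₂ (mod p)`. -/
theorem fA_preserves_lattice_iff (p : ℕ) (hp : 1 ≤ p)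
    (H : Type) [AddCommGroup H] [Module ℤ H] [Module.Free ℤ H] [Module.Finite ℤ H]
    (H' : Submodule ℤ H) (δ δ' : H)
    (hdec : ∀ x : H, ∃! t : H' × ℤ × ℤ, x = (t.1 : H) + t.2.1 • δ + t.2.2 • δ')
    (γ₁ γ₂ : H) (hγ₁ : γ₁ ∈ H') (hγ₂ : γ₂ ∈ H')
    (hind : LinearIndependent ℚ
      ![((1 : ℚ) ⊗ₜ[ℤ] γ₁ : ℚ ⊗[ℤ] H), ((1 : ℚ) ⊗ₜ[ℤ] γ₂ : ℚ ⊗[ℤ] H)])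
    (hsat : {x : H | ((1 : ℚ) ⊗ₜ[ℤ] x : ℚ ⊗[ℤ] H) ∈
          Submodule.span ℚ {((1 : ℚ) ⊗ₜ[ℤ] γ₁ : ℚ ⊗[ℤ] H), ((1 : ℚ) ⊗ₜ[ℤ] γ₂ : ℚ ⊗[ℤ] H)}}
        = {x : H | ∃ a b : ℤ, x = a • γ₁ + b • γ₂})
    (b₁ b₂ : H) (hb₁ : b₁ = γ₁ + (p : ℤ) • δ) (hb₂ : b₂ = γ₂ + (p : ℤ) • δ')
    (a b c d : ℤ) (hdet : a * d - b * c = 1)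
    (f : (ℚ ⊗[ℤ] H) →ₗ[ℚ] (ℚ ⊗[ℤ] H))
    (hfH' : ∀ x ∈ H', f ((1 : ℚ) ⊗ₜ[ℤ] x) = (1 : ℚ) ⊗ₜ[ℤ] x)
    (hfb₁ : f ((1 : ℚ) ⊗ₜ[ℤ] b₁)
      = (a : ℚ) • ((1 : ℚ) ⊗ₜ[ℤ] b₁ : ℚ ⊗[ℤ] H) + (c : ℚ) • ((1 : ℚ) ⊗ₜ[ℤ] b₂ : ℚ ⊗[ℤ] H))
    (hfb₂ : f ((1 : ℚ) ⊗ₜ[ℤ] b₂)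
      = (b : ℚ) • ((1 : ℚ) ⊗ₜ[ℤ] b₁ : ℚ ⊗[ℤ] H) + (d : ℚ) • ((1 : ℚ) ⊗ₜ[ℤ] b₂ : ℚ ⊗[ℤ] H)) :
    (∀ y : ℚ ⊗[ℤ] H,
      ∃! t : (Submodule.span ℚ {z : ℚ ⊗[ℤ] H | ∃ x ∈ H', z = (1 : ℚ) ⊗ₜ[ℤ] x}) × ℚ × ℚ,
        y = (t.1 : ℚ ⊗[ℤ] H) + t.2.1 • ((1 : ℚ) ⊗ₜ[ℤ] b₁ : ℚ ⊗[ℤ] H)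
            + t.2.2 • ((1 : ℚ) ⊗ₜ[ℤ] b₂ : ℚ ⊗[ℤ] H)) ∧
    ((∀ x : H, ∃ y : H, f ((1 : ℚ) ⊗ₜ[ℤ] x) = (1 : ℚ) ⊗ₜ[ℤ] y) ↔
      ((p : ℤ) ∣ a - 1 ∧ (p : ℤ) ∣ b ∧ (p : ℤ) ∣ c ∧ (p : ℤ) ∣ d - 1)) := by
  classical
  rcases Unique.uniq (AddCommGroup.uniqueIntModule (M := H)) ‹Module ℤ H› with rfl
  obtain ⟨ρ, π, π', hproj⟩ := exists_proj H' δ δ' hdec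
  have hp0 : (p : ℚ) ≠ 0 := Nat.cast_ne_zero.mpr (by omega)
  -- uniqueness of decompositions
  have huniq : ∀ (x h : H), h ∈ H' → ∀ m n : ℤ, x = h + m • δ + n • δ' →
      ρ x = h ∧ π x = m ∧ π' x = n := by
    intro x h hh m n hx
    obtain ⟨hm, hx'⟩ := hproj x
    have := (hdec x).unique (y₁ := (⟨ρ x, hm⟩, π x, π' x)) (y₂ := (⟨h, hh⟩, m, n)) hx' hx
    simp only [Prod.ext_iff, Subtype.ext_iff] at this
    exact ⟨this.1, this.2⟩
  have hδc : ρ δ = 0 ∧ π δ = 1 ∧ π' δ = 0 := huniq δ 0 H'.zero_mem 1 0 (by simp)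
  have hδ'c : ρ δ' = 0 ∧ π δ' = 0 ∧ π' δ' = 1 := huniq δ' 0 H'.zero_mem 0 1 (by simp)
  have hH'c : ∀ x ∈ H', ρ x = x ∧ π x = 0 ∧ π' x = 0 := fun x hx =>
    huniq x x hx 0 0 (by simp)
  have hb1c : ρ b₁ = γ₁ ∧ π b₁ = (p : ℤ) ∧ π' b₁ = 0 :=
    huniq b₁ γ₁ hγ₁ (p : ℤ) 0 (by simp [hb₁])
  have hb2c : ρ b₂ = γ₂ ∧ π b₂ = 0 ∧ π' b₂ = (p : ℤ) :=
    huniq b₂ γ₂ hγ₂ 0 (p : ℤ) (by simp [hb₂])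
  -- scalar extraction maps
  set gδ : ℚ ⊗[ℤ] H →ₗ[ℚ] ℚ :=
    LinearMap.liftBaseChange ℚ ((Algebra.linearMap ℤ ℚ) ∘ₗ π) with hgδdef
  set gδ' : ℚ ⊗[ℤ] H →ₗ[ℚ] ℚ :=
    LinearMap.liftBaseChange ℚ ((Algebra.linearMap ℤ ℚ) ∘ₗ π') with hgδ'def
  have hgδ : ∀ x : H, gδ ((1 : ℚ) ⊗ₜ[ℤ] x) = (π x : ℚ) := by
    intro x
    simp [hgδdef, LinearMap.liftBaseChange_tmul]
  have hgδ' : ∀ x : H, gδ' ((1 : ℚ) ⊗ₜ[ℤ] x) = (π' x : ℚ) := by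
    intro x
    simp [hgδ'def, LinearMap.liftBaseChange_tmul]
  -- basic tmul lemmas
  have hsm : ∀ (k : ℤ) (x : H),
      ((1 : ℚ) ⊗ₜ[ℤ] (k • x) : ℚ ⊗[ℤ] H) = (k : ℚ) • ((1 : ℚ) ⊗ₜ[ℤ] x : ℚ ⊗[ℤ] H) := by
    intro k x
    rw [tmul_smul, Int.cast_smul_eq_zsmul]
  have hB1 : ((1 : ℚ) ⊗ₜ[ℤ] b₁ : ℚ ⊗[ℤ] H)
      = (1 : ℚ) ⊗ₜ[ℤ] γ₁ + (p : ℚ) • ((1 : ℚ) ⊗ₜ[ℤ] δ : ℚ ⊗[ℤ] H) := by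
    rw [hb₁, tmul_add, hsm]; norm_num
  have hB2 : ((1 : ℚ) ⊗ₜ[ℤ] b₂ : ℚ ⊗[ℤ] H)
      = (1 : ℚ) ⊗ₜ[ℤ] γ₂ + (p : ℚ) • ((1 : ℚ) ⊗ₜ[ℤ] δ' : ℚ ⊗[ℤ] H) := by
    rw [hb₂, tmul_add, hsm]; norm_num
  -- values of f on δ and δ'
  have hfD : f ((1 : ℚ) ⊗ₜ[ℤ] δ)
      = (p : ℚ)⁻¹ • ((a : ℚ) • ((1 : ℚ) ⊗ₜ[ℤ] b₁ : ℚ ⊗[ℤ] H)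
          + (c : ℚ) • ((1 : ℚ) ⊗ₜ[ℤ] b₂ : ℚ ⊗[ℤ] H) - (1 : ℚ) ⊗ₜ[ℤ] γ₁) := by
    have h1 : (p : ℚ) • f ((1 : ℚ) ⊗ₜ[ℤ] δ)
        = (a : ℚ) • ((1 : ℚ) ⊗ₜ[ℤ] b₁ : ℚ ⊗[ℤ] H)
          + (c : ℚ) • ((1 : ℚ) ⊗ₜ[ℤ] b₂ : ℚ ⊗[ℤ] H) - (1 : ℚ) ⊗ₜ[ℤ] γ₁ := by
      have h2 := hfb₁
      nth_rewrite 1 [hB1] at h2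
      rw [map_add, map_smul, hfH' γ₁ hγ₁] at h2
      rw [eq_sub_iff_add_eq, add_comm]
      exact h2
    rw [← h1, inv_smul_smul₀ hp0]
  have hfD' : f ((1 : ℚ) ⊗ₜ[ℤ] δ')
      = (p : ℚ)⁻¹ • ((b : ℚ) • ((1 : ℚ) ⊗ₜ[ℤ] b₁ : ℚ ⊗[ℤ] H)
          + (d : ℚ) • ((1 : ℚ) ⊗ₜ[ℤ] b₂ : ℚ ⊗[ℤ] H) - (1 : ℚ) ⊗ₜ[ℤ] γ₂) := by
    have h1 : (p : ℚ) • f ((1 : ℚ) ⊗ₜ[ℤ] δ')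
        = (b : ℚ) • ((1 : ℚ) ⊗ₜ[ℤ] b₁ : ℚ ⊗[ℤ] H)
          + (d : ℚ) • ((1 : ℚ) ⊗ₜ[ℤ] b₂ : ℚ ⊗[ℤ] H) - (1 : ℚ) ⊗ₜ[ℤ] γ₂ := by
      have h2 := hfb₂
      nth_rewrite 1 [hB2] at h2
      rw [map_add, map_smul, hfH' γ₂ hγ₂] at h2
      rw [eq_sub_iff_add_eq, add_comm]
      exact h2
    rw [← h1, inv_smul_smul₀ hp0]
  -- expansion of 1 ⊗ x
  have hexp : ∀ x : H, ((1 : ℚ) ⊗ₜ[ℤ] x : ℚ ⊗[ℤ] H)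
      = (1 : ℚ) ⊗ₜ[ℤ] (ρ x) + (π x : ℚ) • ((1 : ℚ) ⊗ₜ[ℤ] δ : ℚ ⊗[ℤ] H)
        + (π' x : ℚ) • ((1 : ℚ) ⊗ₜ[ℤ] δ' : ℚ ⊗[ℤ] H) := by
    intro x
    conv_lhs => rw [(hproj x).2]
    rw [tmul_add, tmul_add, hsm, hsm]
  -- gδ vanishes on the span of H'
  have hWδ : ∀ w ∈ Submodule.span ℚ {z : ℚ ⊗[ℤ] H | ∃ x ∈ H', z = (1 : ℚ) ⊗ₜ[ℤ] x},
      gδ w = 0 ∧ gδ' w = 0 := by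
    intro w hw
    induction hw using Submodule.span_induction with
    | mem z hz =>
        obtain ⟨x, hx, rfl⟩ := hz
        rw [hgδ, hgδ', (hH'c x hx).2.1, (hH'c x hx).2.2]
        norm_num
    | zero => simp
    | add u v _ _ h1 h2 => simp [h1.1, h1.2, h2.1, h2.2]
    | smul q u _ h1 => simp [h1.1, h1.2]
  have hgδb1 : gδ ((1 : ℚ) ⊗ₜ[ℤ] b₁) = (p : ℚ) := by rw [hgδ, hb1c.2.1]; norm_num
  have hgδb2 : gδ ((1 : ℚ) ⊗ₜ[ℤ] b₂) = 0 := by rw [hgδ, hb2c.2.1]; norm_num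
  have hgδ'b1 : gδ' ((1 : ℚ) ⊗ₜ[ℤ] b₁) = 0 := by rw [hgδ', hb1c.2.2]; norm_num
  have hgδ'b2 : gδ' ((1 : ℚ) ⊗ₜ[ℤ] b₂) = (p : ℚ) := by rw [hgδ', hb2c.2.2]; norm_num
  -- key extraction lemma
  have keyLem : ∀ (y : H) (s1 s2 t1 t2 : ℚ),
      ((1 : ℚ) ⊗ₜ[ℤ] y : ℚ ⊗[ℤ] H)
        = s1 • ((1 : ℚ) ⊗ₜ[ℤ] γ₁ : ℚ ⊗[ℤ] H) + s2 • ((1 : ℚ) ⊗ₜ[ℤ] γ₂ : ℚ ⊗[ℤ] H)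
          + t1 • ((1 : ℚ) ⊗ₜ[ℤ] δ : ℚ ⊗[ℤ] H) + t2 • ((1 : ℚ) ⊗ₜ[ℤ] δ' : ℚ ⊗[ℤ] H) →
      ∃ α β : ℤ, (α : ℚ) = s1 ∧ (β : ℚ) = s2 := by
    intro y s1 s2 t1 t2 hY
    have eπ : (π y : ℚ) = t1 := by
      have e := congrArg gδ hY
      simp only [map_add, map_smul, hgδ, smul_eq_mul] at e
      rw [(hH'c γ₁ hγ₁).2.1, (hH'c γ₂ hγ₂).2.1, hδc.2.1, hδ'c.2.1] at e
      push_cast at e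
      linarith
    have eπ' : (π' y : ℚ) = t2 := by
      have e := congrArg gδ' hY
      simp only [map_add, map_smul, hgδ', smul_eq_mul] at e
      rw [(hH'c γ₁ hγ₁).2.2, (hH'c γ₂ hγ₂).2.2, hδc.2.2, hδ'c.2.2] at e
      push_cast at e
      linarith
    have eY := hexp y
    rw [eπ, eπ'] at eY
    have h7 := eY.symm.trans hY
    have eρ : ((1 : ℚ) ⊗ₜ[ℤ] (ρ y) : ℚ ⊗[ℤ] H)
        = s1 • ((1 : ℚ) ⊗ₜ[ℤ] γ₁ : ℚ ⊗[ℤ] H) + s2 • ((1 : ℚ) ⊗ₜ[ℤ] γ₂ : ℚ ⊗[ℤ] H) :=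
      add_right_cancel (add_right_cancel h7)
    have hmem2 : ((1 : ℚ) ⊗ₜ[ℤ] (ρ y) : ℚ ⊗[ℤ] H) ∈
        Submodule.span ℚ {((1 : ℚ) ⊗ₜ[ℤ] γ₁ : ℚ ⊗[ℤ] H), ((1 : ℚ) ⊗ₜ[ℤ] γ₂ : ℚ ⊗[ℤ] H)} := by
      rw [eρ]
      exact add_mem
        (Submodule.smul_mem _ _ (Submodule.subset_span (Set.mem_insert _ _)))
        (Submodule.smul_mem _ _ (Submodule.subset_span (Set.mem_insert_of_mem _ rfl)))
    have h8 : ρ y ∈ {x : H | ∃ a b : ℤ, x = a • γ₁ + b • γ₂} := by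
      rw [← hsat]; exact hmem2
    obtain ⟨α, β, hαβ⟩ := h8
    have e9 : ((1 : ℚ) ⊗ₜ[ℤ] (ρ y) : ℚ ⊗[ℤ] H)
        = (α : ℚ) • ((1 : ℚ) ⊗ₜ[ℤ] γ₁ : ℚ ⊗[ℤ] H)
          + (β : ℚ) • ((1 : ℚ) ⊗ₜ[ℤ] γ₂ : ℚ ⊗[ℤ] H) := by
      rw [hαβ, tmul_add, hsm, hsm]
    have hz : ((α : ℚ) - s1) • ((1 : ℚ) ⊗ₜ[ℤ] γ₁ : ℚ ⊗[ℤ] H)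
        + ((β : ℚ) - s2) • ((1 : ℚ) ⊗ₜ[ℤ] γ₂ : ℚ ⊗[ℤ] H) = 0 := by
      rw [sub_smul, sub_smul, sub_add_sub_comm, sub_eq_zero]
      exact e9.symm.trans eρ
    obtain ⟨hA, hB⟩ := hind.eq_zero_of_pair hz
    exact ⟨α, β, sub_eq_zero.mp hA, sub_eq_zero.mp hB⟩
  constructor
  · -- the direct sum decomposition
    intro y
    have hex : ∃ w ∈ Submodule.span ℚ {z : ℚ ⊗[ℤ] H | ∃ x ∈ H', z = (1 : ℚ) ⊗ₜ[ℤ] x},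
        ∃ s t : ℚ, y = w + s • ((1 : ℚ) ⊗ₜ[ℤ] b₁ : ℚ ⊗[ℤ] H)
          + t • ((1 : ℚ) ⊗ₜ[ℤ] b₂ : ℚ ⊗[ℤ] H) := by
      induction y using TensorProduct.induction_on with
      | zero => exact ⟨0, Submodule.zero_mem _, 0, 0, by simp⟩
      | tmul q x =>
          refine ⟨q • ((1 : ℚ) ⊗ₜ[ℤ] (ρ x) : ℚ ⊗[ℤ] H)
              - (q * (π x : ℚ) / p) • ((1 : ℚ) ⊗ₜ[ℤ] γ₁ : ℚ ⊗[ℤ] H)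
              - (q * (π' x : ℚ) / p) • ((1 : ℚ) ⊗ₜ[ℤ] γ₂ : ℚ ⊗[ℤ] H), ?_,
            q * (π x : ℚ) / p, q * (π' x : ℚ) / p, ?_⟩
          · exact sub_mem (sub_mem
              (Submodule.smul_mem _ _ (Submodule.subset_span ⟨ρ x, (hproj x).1, rfl⟩))
              (Submodule.smul_mem _ _ (Submodule.subset_span ⟨γ₁, hγ₁, rfl⟩)))
              (Submodule.smul_mem _ _ (Submodule.subset_span ⟨γ₂, hγ₂, rfl⟩))
          · have hq : (q ⊗ₜ[ℤ] x : ℚ ⊗[ℤ] H) = q • ((1 : ℚ) ⊗ₜ[ℤ] x : ℚ ⊗[ℤ] H) := by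
              rw [smul_tmul', smul_eq_mul, mul_one]
            rw [hq, hexp x, hB1, hB2]
            match_scalars <;> (field_simp <;> ring)
      | add u v hu hv =>
          obtain ⟨w1, hw1, s1, t1, e1⟩ := hu
          obtain ⟨w2, hw2, s2, t2, e2⟩ := hv
          exact ⟨w1 + w2, add_mem hw1 hw2, s1 + s2, t1 + t2, by
            rw [e1, e2]; module⟩
    obtain ⟨w, hw, s, t, hy⟩ := hex
    refine ⟨(⟨w, hw⟩, s, t), hy, ?_⟩
    rintro ⟨⟨w2, hw2⟩, s2, t2⟩ h2
    have heq : w2 + s2 • ((1 : ℚ) ⊗ₜ[ℤ] b₁ : ℚ ⊗[ℤ] H) + t2 • ((1 : ℚ) ⊗ₜ[ℤ] b₂ : ℚ ⊗[ℤ] H)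
        = w + s • ((1 : ℚ) ⊗ₜ[ℤ] b₁ : ℚ ⊗[ℤ] H) + t • ((1 : ℚ) ⊗ₜ[ℤ] b₂ : ℚ ⊗[ℤ] H) :=
      h2.symm.trans hy
    have hs : s2 = s := by
      have e := congrArg gδ heq
      simp only [map_add, map_smul, hgδb1, hgδb2, (hWδ w2 hw2).1, (hWδ w hw).1,
        smul_eq_mul, mul_zero, add_zero, zero_add] at e
      exact mul_right_cancel₀ hp0 e
    have ht : t2 = t := by
      have e := congrArg gδ' heq
      simp only [map_add, map_smul, hgδ'b1, hgδ'b2, (hWδ w2 hw2).2, (hWδ w hw).2,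
        smul_eq_mul, mul_zero, add_zero, zero_add] at e
      exact mul_right_cancel₀ hp0 e
    rw [hs, ht] at heq
    have hww : w2 = w := add_right_cancel (add_right_cancel heq)
    exact Prod.ext (Subtype.ext hww) (Prod.ext hs ht)
  · constructor
    · -- f preserves H → congruence
      intro hmap
      have part1 : (p : ℤ) ∣ a - 1 ∧ (p : ℤ) ∣ c := by
        obtain ⟨y1, hy1⟩ := hmap δ
        have e1 : ((1 : ℚ) ⊗ₜ[ℤ] y1 : ℚ ⊗[ℤ] H)
            = (((a : ℚ) - 1) / p) • ((1 : ℚ) ⊗ₜ[ℤ] γ₁ : ℚ ⊗[ℤ] H)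
              + (((c : ℚ)) / p) • ((1 : ℚ) ⊗ₜ[ℤ] γ₂ : ℚ ⊗[ℤ] H)
              + (a : ℚ) • ((1 : ℚ) ⊗ₜ[ℤ] δ : ℚ ⊗[ℤ] H)
              + (c : ℚ) • ((1 : ℚ) ⊗ₜ[ℤ] δ' : ℚ ⊗[ℤ] H) := by
          rw [← hy1, hfD, hB1, hB2]
          match_scalars <;> field_simp
        obtain ⟨α, β, hα, hβ⟩ := keyLem y1 _ _ _ _ e1
        constructor
        · refine ⟨α, ?_⟩
          have : (a : ℚ) - 1 = (p : ℚ) * (α : ℚ) := by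
            rw [hα]; field_simp
          exact_mod_cast this
        · refine ⟨β, ?_⟩
          have : (c : ℚ) = (p : ℚ) * (β : ℚ) := by
            rw [hβ]; field_simp
          exact_mod_cast this
      have part2 : (p : ℤ) ∣ b ∧ (p : ℤ) ∣ d - 1 := by
        obtain ⟨y2, hy2⟩ := hmap δ'
        have e2 : ((1 : ℚ) ⊗ₜ[ℤ] y2 : ℚ ⊗[ℤ] H)
            = (((b : ℚ)) / p) • ((1 : ℚ) ⊗ₜ[ℤ] γ₁ : ℚ ⊗[ℤ] H)
              + (((d : ℚ) - 1) / p) • ((1 : ℚ) ⊗ₜ[ℤ] γ₂ : ℚ ⊗[ℤ] H)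
              + (b : ℚ) • ((1 : ℚ) ⊗ₜ[ℤ] δ : ℚ ⊗[ℤ] H)
              + (d : ℚ) • ((1 : ℚ) ⊗ₜ[ℤ] δ' : ℚ ⊗[ℤ] H) := by
          rw [← hy2, hfD', hB1, hB2]
          match_scalars <;> field_simp
        obtain ⟨α, β, hα, hβ⟩ := keyLem y2 _ _ _ _ e2
        constructor
        · refine ⟨α, ?_⟩
          have : (b : ℚ) = (p : ℚ) * (α : ℚ) := by
            rw [hα]; field_simp
          exact_mod_cast this
        · refine ⟨β, ?_⟩
          have : (d : ℚ) - 1 = (p : ℚ) * (β : ℚ) := by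
            rw [hβ]; field_simp
          exact_mod_cast this
      exact ⟨part1.1, part2.1, part1.2, part2.2⟩
    · -- congruence → f preserves H
      rintro ⟨⟨a1, ha1⟩, ⟨bb1, hbb1⟩, ⟨c1, hc1⟩, ⟨d1, hd1⟩⟩
      intro x
      have haQ : (a : ℚ) = (p : ℚ) * (a1 : ℚ) + 1 := by
        have : (a : ℤ) = (p : ℤ) * a1 + 1 := by omega
        exact_mod_cast this
      have hbQ : (b : ℚ) = (p : ℚ) * (bb1 : ℚ) := by exact_mod_cast hbb1
      have hcQ : (c : ℚ) = (p : ℚ) * (c1 : ℚ) := by exact_mod_cast hc1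
      have hdQ : (d : ℚ) = (p : ℚ) * (d1 : ℚ) + 1 := by
        have : (d : ℤ) = (p : ℤ) * d1 + 1 := by omega
        exact_mod_cast this
      refine ⟨ρ x + (π x * a1 + π' x * bb1) • γ₁ + (π x * c1 + π' x * d1) • γ₂
          + (π x * a + π' x * b) • δ + (π x * c + π' x * d) • δ', ?_⟩
      conv_lhs => rw [hexp x]
      rw [map_add, map_add, map_smul, map_smul, hfH' (ρ x) (hproj x).1, hfD, hfD', hB1, hB2]
      simp only [tmul_add, hsm]
      match_scalars <;> (push_cast; simp only [haQ, hbQ, hcQ, hdQ]; try field_simp; try ring)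
end
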